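/- The ring homomorphism ℤ[X,Y] → ℤ[T] × ℤ[T] sending a polynomial h(X,Y) to the pair (h(T,0), h(T,−T)) has kernel equal to the principal ideal generated by Y·(X+Y), and its image is exactly the subring {(f,g) ∈ ℤ[T] × ℤ[T] : f(0) = g(0)}. Consequently ℤ[X,Y]/(Y·(X+Y)) is isomorphic to the fiber product of two copies of ℤ[T] over ℤ, both structure maps being evaluation at 0. -/

import Mathlib

/-!
Identify `ℤ[X,Y]` with `ℤ[X][Y]`. Then `substHom` evaluates a polynomial in `Y` at the two points
`0` and `-X` of `ℤ[X]`. Their difference `X` is a non-zero-divisor, so a polynomial vanishing at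
both is divisible by `Y * (Y + X)`. A pair `(u, v)` is a value iff `X ∣ u - v`: if
`u - v = X * c`, then `v + c * (Y + X)` interpolates it. Finally `X ∣ u - v` iff `u(0) = v(0)`.
-/

open MvPolynomial

noncomputable def substHom : MvPolynomial (Fin 2) ℤ →+* Polynomial ℤ × Polynomial ℤ :=
  RingHom.prod
    ((aeval ![Polynomial.X, 0] : MvPolynomial (Fin 2) ℤ →ₐ[ℤ] Polynomial ℤ) : MvPolynomial (Fin 2) ℤ →+* Polynomial ℤ)
    ((aeval ![Polynomial.X, -Polynomial.X] : MvPolynomial (Fin 2) ℤ →ₐ[ℤ] Polynomial ℤ) : MvPolynomial (Fin 2) ℤ →+* Polynomial ℤ)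

noncomputable def fiberProd : Subring (Polynomial ℤ × Polynomial ℤ) :=
  RingHom.eqLocus
    ((Polynomial.evalRingHom (0 : ℤ)).comp (RingHom.fst (Polynomial ℤ) (Polynomial ℤ)))
    ((Polynomial.evalRingHom (0 : ℤ)).comp (RingHom.snd (Polynomial ℤ) (Polynomial ℤ)))

namespace Polynomial

variable {R : Type*} [CommRing R]

theorem X_sub_C_mul_X_sub_C_dvd {p : R[X]} {a b : R} (hab : IsLeftRegular (a - b))
    (ha : p.IsRoot a) (hb : p.IsRoot b) : (X - C a) * (X - C b) ∣ p := by
  obtain ⟨q, rfl⟩ := dvd_iff_isRoot.mpr hb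
  have hqa : q.IsRoot a := hab <| by simpa using ha
  obtain ⟨r, rfl⟩ := dvd_iff_isRoot.mpr hqa
  exact ⟨r, by ring⟩

theorem ker_evalRingHom_prod {a b : R} (hab : IsLeftRegular (a - b)) :
    RingHom.ker ((evalRingHom a).prod (evalRingHom b)) = Ideal.span {(X - C a) * (X - C b)} := by
  ext p
  rw [RingHom.mem_ker, Ideal.mem_span_singleton]
  refine ⟨fun hp => X_sub_C_mul_X_sub_C_dvd hab (congrArg Prod.fst hp) (congrArg Prod.snd hp), ?_⟩
  rintro ⟨q, rfl⟩
  simp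

theorem mem_range_evalRingHom_prod_iff {a b u v : R} :
    (u, v) ∈ ((evalRingHom a).prod (evalRingHom b)).range ↔ a - b ∣ u - v := by
  constructor
  · rintro ⟨p, hp⟩
    obtain ⟨rfl, rfl⟩ := Prod.mk.inj hp
    exact sub_dvd_eval_sub a b p
  · rintro ⟨c, hc⟩
    refine ⟨C v + C c * (X - C b), ?_⟩
    simp only [RingHom.prod_apply, coe_evalRingHom, eval_add, eval_mul, eval_C, eval_sub, eval_X,
      sub_self, mul_zero, add_zero, Prod.mk.injEq, and_true]
    linear_combination -hc

theorem X_dvd_sub_iff {f g : R[X]} : X ∣ f - g ↔ f.eval 0 = g.eval 0 := by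
  rw [X_dvd_iff, coeff_sub, sub_eq_zero, coeff_zero_eq_eval_zero, coeff_zero_eq_eval_zero]

end Polynomial

namespace MvPolynomial

variable (R : Type*) [CommRing R]

/-- `X 0 ↦ C X` and `X 1 ↦ X`: the second variable becomes the outer one. -/
noncomputable def finTwoAlgEquiv : MvPolynomial (Fin 2) R ≃ₐ[R] Polynomial (Polynomial R) :=
  (renameEquiv R (finSuccEquiv' 1)).trans
    ((optionEquivLeft R (Fin 1)).trans (Polynomial.mapAlgEquiv (uniqueAlgEquiv R (Fin 1))))

@[simp]
theorem finTwoAlgEquiv_C (r : R) : finTwoAlgEquiv R (C r) = Polynomial.C (Polynomial.C r) := by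
  simp [finTwoAlgEquiv]

@[simp]
theorem finTwoAlgEquiv_X_zero : finTwoAlgEquiv R (X 0) = Polynomial.C Polynomial.X := by
  have h0 : finSuccEquiv' (1 : Fin 2) 0 = some 0 := rfl
  simp [finTwoAlgEquiv, h0]

@[simp]
theorem finTwoAlgEquiv_X_one : finTwoAlgEquiv R (X 1) = Polynomial.X := by
  simp [finTwoAlgEquiv]

variable {R}

theorem aeval_X_cons_eq_eval_finTwoAlgEquiv (b : Polynomial R) (h : MvPolynomial (Fin 2) R) :
    aeval ![Polynomial.X, b] h = (finTwoAlgEquiv R h).eval b := by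
  induction h using MvPolynomial.induction_on with
  | C r => simp
  | add p q hp hq => simp [hp, hq]
  | mul_X p i hp => fin_cases i <;> simp [hp]

end MvPolynomial

theorem substHom_eq_comp : substHom =
    ((Polynomial.evalRingHom 0).prod (Polynomial.evalRingHom (-Polynomial.X))).comp
      (finTwoAlgEquiv ℤ : MvPolynomial (Fin 2) ℤ →+* Polynomial (Polynomial ℤ)) :=
  RingHom.ext fun h => by simp [substHom, aeval_X_cons_eq_eval_finTwoAlgEquiv]

theorem ker_substHom :
    RingHom.ker substHom = Ideal.span {(X 1 * (X 0 + X 1) : MvPolynomial (Fin 2) ℤ)} := by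
  have hreg : IsLeftRegular ((0 : Polynomial ℤ) - -Polynomial.X) := by simp
  have hgen : (Polynomial.X - Polynomial.C 0) * (Polynomial.X - Polynomial.C (-Polynomial.X)) =
      finTwoAlgEquiv ℤ (X 1 * (X 0 + X 1)) := by
    simp only [map_mul, map_add, finTwoAlgEquiv_X_zero, finTwoAlgEquiv_X_one, map_neg, map_zero]
    ring
  rw [substHom_eq_comp, ← RingHom.comap_ker, Polynomial.ker_evalRingHom_prod hreg, hgen]
  ext h
  rw [Ideal.mem_comap, Ideal.mem_span_singleton, Ideal.mem_span_singleton]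
  exact map_dvd_iff (finTwoAlgEquiv ℤ)

theorem range_substHom : substHom.range = fiberProd := by
  ext ⟨f, g⟩
  rw [substHom_eq_comp, ← RingHom.map_range,
    RingHom.range_eq_top.2 (finTwoAlgEquiv ℤ).surjective, ← RingHom.range_eq_map,
    Polynomial.mem_range_evalRingHom_prod_iff, zero_sub, neg_neg, Polynomial.X_dvd_sub_iff]
  rfl

theorem substHom_ker_range :
    RingHom.ker substHom = Ideal.span {(X 1 * (X 0 + X 1) : MvPolynomial (Fin 2) ℤ)} ∧
    substHom.range = fiberProd ∧
    Nonempty ((MvPolynomial (Fin 2) ℤ ⧸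
      Ideal.span {(X 1 * (X 0 + X 1) : MvPolynomial (Fin 2) ℤ)}) ≃+* fiberProd) := by
  refine ⟨ker_substHom, range_substHom, ?_⟩
  rw [← ker_substHom, ← range_substHom]
  exact ⟨substHom.quotientKerEquivRange⟩
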